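/- arXiv:0706.0721 — 2 statements merged into one kernel-verified Lean document; each statement's English description precedes it below -/
import Mathlib

section
/- Let K be a field of characteristic zero and 𝔸_n = 𝔸₁^{⊗n} the n-th Jacobian algebra. Then F^{⊗n} is the smallest nonzero two-sided ideal of 𝔸_n, (F^{⊗n})² = F^{⊗n}, and consequently 𝔸_n is a prime ring. -/
set_option synthInstance.maxHeartbeats 1000000
set_option maxHeartbeats 1000000

open MvPolynomial

/-- Multiplication by `x i` on the polynomial algebra. -/
noncomputable def xO (K : Type*) [Field K] (n : ℕ) (i : Fin n) :
    Module.End K (MvPolynomial (Fin n) K) :=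
  LinearMap.mulLeft K (MvPolynomial.X i)

/-- The partial derivative `∂ i` on the polynomial algebra. -/
noncomputable def dO (K : Type*) [Field K] (n : ℕ) (i : Fin n) :
    Module.End K (MvPolynomial (Fin n) K) :=
  (MvPolynomial.pderiv i).toLinearMap

/-- The Jacobian algebra `𝔸ₙ`: the subalgebra of `End_K(K[x₁,…,xₙ])` generated by the
Weyl algebra (i.e. the `xᵢ` and `∂ᵢ`) together with the inverses of the `Hᵢ = ∂ᵢ xᵢ`. -/
noncomputable def An (K : Type*) [Field K] (n : ℕ) :
    Subalgebra K (Module.End K (MvPolynomial (Fin n) K)) :=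
  Algebra.adjoin K (Set.range (xO K n) ∪ Set.range (dO K n) ∪
    {g | ∃ i, g * (dO K n i * xO K n i) = 1 ∧ (dO K n i * xO K n i) * g = 1})

/-- `I` is a two-sided ideal (as a `K`-submodule, which is automatic for ideals of a
unital `K`-algebra with central `K`). -/
def IsTwoSided {K A : Type*} [CommSemiring K] [Ring A] [Algebra K A]
    (I : Submodule K A) : Prop :=
  ∀ a ∈ I, ∀ r : A, r * a ∈ I ∧ a * r ∈ I

/-- A prime (two-sided) ideal: proper, and `I*J ⊆ P` implies `I ⊆ P` or `J ⊆ P`. -/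
def IsPrimeIdeal {K A : Type*} [CommSemiring K] [Ring A] [Algebra K A]
    (P : Submodule K A) : Prop :=
  P ≠ ⊤ ∧ IsTwoSided P ∧
    ∀ I J : Submodule K A, IsTwoSided I → IsTwoSided J → I * J ≤ P → I ≤ P ∨ J ≤ P

/-- The carrier of the height-one prime `𝔭ᵢ = 𝔸₁^{⊗(i−1)} ⊗ F ⊗ 𝔸₁^{⊗(n−i)}`:
operators in `𝔸ₙ` vanishing on `xᵢ^m · K[x₁,…,xₙ]` for some `m`. -/
def pCar (K : Type*) [Field K] (n : ℕ) (i : Fin n) : Set ↥(An K n) :=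
  {a | ∃ m : ℕ, ∀ p : MvPolynomial (Fin n) K,
    (a : Module.End K (MvPolynomial (Fin n) K)) (MvPolynomial.X i ^ m * p) = 0}

/-!
Over a field of characteristic zero, `𝔸ₙ` contains every matrix unit `E δ β : p ↦ coeff β p • x^δ`
of `End_K(K[x₁,…,xₙ])` for the monomial basis: the projection onto the constants is
`E 0 0 = ∏ᵢ (1 - xᵢ Hᵢ⁻¹ ∂ᵢ)`, and the other units arise from it by multiplying by `xᵢ` on the
left and by `∂ᵢ` on the right. The identity `E δ β · a · E γ ρ = coeff β (a x^γ) • E δ ρ` shows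
that a nonzero two-sided ideal contains all matrix units and that `a 𝔸ₙ b = 0` forces `a = 0` or
`b = 0`. An element `a` of `F^{⊗n}` kills all but finitely many monomials, so
`a = ∑ α ∈ S, a E α α = ∑ α ∈ S, (a E α 0) (E 0 α)`; this gives both the minimality of `F^{⊗n}`
and `(F^{⊗n})² = F^{⊗n}`. Finally `F^{⊗n}` is a two-sided ideal because every generator of `𝔸ₙ`,
hence every element, maps `xᵢ^{m'} K[x]` into `xᵢ^m K[x]` once `m'` is large.
-/

theorem Finsupp.induction_add_single_one {ι : Type*} {motive : (ι →₀ ℕ) → Prop}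
    (zero : motive 0) (add_single_one : ∀ f i, motive f → motive (f + single i 1))
    (f : ι →₀ ℕ) : motive f := by
  induction f using Finsupp.induction with
  | zero => exact zero
  | single_add i k f _ _ hf =>
    clear * - hf add_single_one
    induction k with
    | zero => simpa using hf
    | succ k hk =>
      rw [single_add, add_right_comm]
      exact add_single_one _ i hk

namespace MvPolynomial

variable {σ R : Type*} [CommSemiring R]

theorem linearMap_ext_monomial_one {M : Type*} [AddCommMonoid M] [Module R M]
    {f g : MvPolynomial σ R →ₗ[R] M} (h : ∀ α, f (monomial α 1) = g (monomial α 1)) : f = g :=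
  (basisMonomials σ R).ext fun α => by simpa using h α

noncomputable def matrixUnit (δ β : σ →₀ ℕ) : Module.End R (MvPolynomial σ R) :=
  (lcoeff R β).smulRight (monomial δ 1)

@[simp]
theorem matrixUnit_apply (δ β : σ →₀ ℕ) (p : MvPolynomial σ R) :
    matrixUnit δ β p = coeff β p • monomial δ 1 :=
  rfl

theorem matrixUnit_mul_mul_matrixUnit (δ β γ ρ : σ →₀ ℕ) (f : Module.End R (MvPolynomial σ R)) :
    matrixUnit δ β * f * matrixUnit γ ρ = coeff β (f (monomial γ 1)) • matrixUnit δ ρ := by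
  refine LinearMap.ext fun p => ?_
  simp [smul_smul, mul_comm]

theorem matrixUnit_mul_matrixUnit (δ β ρ : σ →₀ ℕ) :
    matrixUnit δ β * matrixUnit β ρ = (matrixUnit δ ρ : Module.End R (MvPolynomial σ R)) := by
  classical
  simpa [coeff_monomial] using
    matrixUnit_mul_mul_matrixUnit δ β β ρ (1 : Module.End R (MvPolynomial σ R))

theorem mulLeft_X_mul_matrixUnit (i : σ) (δ β : σ →₀ ℕ) :
    LinearMap.mulLeft R (X i) * matrixUnit δ β = matrixUnit (δ + Finsupp.single i 1) β := by
  refine LinearMap.ext fun p => ?_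
  simp [add_comm δ, monomial_single_add]

theorem matrixUnit_mul_pderiv (i : σ) (δ β : σ →₀ ℕ) :
    matrixUnit δ β * (pderiv i).toLinearMap =
      ((β i : R) + 1) •
        (matrixUnit δ (β + Finsupp.single i 1) : Module.End R (MvPolynomial σ R)) := by
  refine LinearMap.ext fun p => ?_
  simp [coeff_pderiv, smul_smul, mul_comm]

theorem eq_sum_mul_matrixUnit (f : Module.End R (MvPolynomial σ R)) (S : Finset (σ →₀ ℕ))
    (hf : ∀ α ∉ S, f (monomial α 1) = 0) : f = ∑ α ∈ S, f * matrixUnit α α := by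
  classical
  refine linearMap_ext_monomial_one fun β => ?_
  rw [LinearMap.sum_apply]
  simp only [Module.End.mul_apply, matrixUnit_apply, coeff_monomial, ite_smul, one_smul,
    zero_smul, apply_ite f, map_zero, Finset.sum_ite_eq]
  split_ifs with hβ
  · rfl
  · exact hf β hβ

theorem exists_coeff_apply_monomial_ne_zero {f : Module.End R (MvPolynomial σ R)} (hf : f ≠ 0) :
    ∃ β γ, coeff β (f (monomial γ 1)) ≠ 0 := by
  contrapose! hf
  exact linearMap_ext_monomial_one fun γ => MvPolynomial.ext _ _ fun β => hf β γ

noncomputable def diagonalEnd : ((σ →₀ ℕ) → R) →* Module.End R (MvPolynomial σ R) where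
  toFun c := (basisMonomials σ R).constr R fun α => c α • basisMonomials σ R α
  map_one' := (basisMonomials σ R).ext fun α => by
    rw [Module.Basis.constr_basis, Pi.one_apply, one_smul, Module.End.one_apply]
  map_mul' c d := (basisMonomials σ R).ext fun α => by
    rw [Module.End.mul_apply, Module.Basis.constr_basis, Module.Basis.constr_basis, map_smul,
      Module.Basis.constr_basis, smul_smul, Pi.mul_apply, mul_comm]

theorem diagonalEnd_monomial (c : (σ →₀ ℕ) → R) (α : σ →₀ ℕ) (a : R) :
    diagonalEnd c (monomial α a) = c α • monomial α a := by
  have h := (basisMonomials σ R).constr_basis R (fun α => c α • basisMonomials σ R α) α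
  rw [coe_basisMonomials] at h
  rw [← mul_one a, ← smul_eq_mul, ← smul_monomial, map_smul, smul_comm]
  exact congrArg (a • ·) h

theorem diagonalEnd_X_pow_mul (c : (σ →₀ ℕ) → R) (i : σ) (m : ℕ) (p : MvPolynomial σ R) :
    diagonalEnd c (X i ^ m * p) =
      X i ^ m * diagonalEnd (fun α => c (Finsupp.single i m + α)) p := by
  have h : diagonalEnd c ∘ₗ LinearMap.mulLeft R (X i ^ m) =
      LinearMap.mulLeft R (X i ^ m) ∘ₗ diagonalEnd (fun α => c (Finsupp.single i m + α)) :=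
    linearMap_ext_monomial_one fun α => by
      simp [← monomial_single_add, diagonalEnd_monomial]
  exact LinearMap.congr_fun h p

theorem apply_X_pow_mul_eq_zero_of_le {f : Module.End R (MvPolynomial σ R)} {i : σ} {m M : ℕ}
    (hf : ∀ p, f (X i ^ m * p) = 0) (h : m ≤ M) (p : MvPolynomial σ R) :
    f (X i ^ M * p) = 0 := by
  rw [← Nat.add_sub_cancel' h, pow_add, mul_assoc]
  exact hf _

theorem matrixUnit_apply_X_pow_mul (δ β : σ →₀ ℕ) (i : σ) (p : MvPolynomial σ R) :
    matrixUnit δ β (X i ^ (β i + 1) * p) = 0 := by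
  rw [matrixUnit_apply, X_pow_eq_monomial, coeff_monomial_mul',
    if_neg (by rw [Finsupp.single_le_iff]; omega), zero_smul]

end MvPolynomial

namespace MvPolynomial

section SubalgebraContainingMatrixUnits

variable {σ K : Type*} [Field K] {A : Subalgebra K (Module.End K (MvPolynomial σ K))}
  (hA : ∀ δ β, matrixUnit δ β ∈ A)

noncomputable def matrixUnitIn (δ β : σ →₀ ℕ) : A :=
  ⟨matrixUnit δ β, hA δ β⟩

theorem matrixUnitIn_mul_mul_matrixUnitIn (δ β γ ρ : σ →₀ ℕ) (a : A) :
    matrixUnitIn hA δ β * a * matrixUnitIn hA γ ρ =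
      coeff β ((a : Module.End K (MvPolynomial σ K)) (monomial γ 1)) • matrixUnitIn hA δ ρ :=
  Subtype.ext <| by
    rw [Subalgebra.coe_mul, Subalgebra.coe_mul, Subalgebra.coe_smul]
    exact matrixUnit_mul_mul_matrixUnit δ β γ ρ (a : Module.End K (MvPolynomial σ K))

theorem matrixUnitIn_ne_zero (δ β : σ →₀ ℕ) : matrixUnitIn hA δ β ≠ 0 := by
  classical
  intro h
  have h' := LinearMap.congr_fun (congrArg Subtype.val h) (monomial β 1)
  simp [matrixUnitIn, coeff_monomial] at h'

theorem matrixUnitIn_mul_matrixUnitIn (δ β ρ : σ →₀ ℕ) :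
    matrixUnitIn hA δ β * matrixUnitIn hA β ρ = matrixUnitIn hA δ ρ :=
  Subtype.ext (matrixUnit_mul_matrixUnit δ β ρ)

theorem eq_sum_mul_matrixUnitIn (a : A) (S : Finset (σ →₀ ℕ))
    (ha : ∀ α ∉ S, (a : Module.End K (MvPolynomial σ K)) (monomial α 1) = 0) :
    a = ∑ α ∈ S, a * matrixUnitIn hA α α :=
  Subtype.ext <| by
    rw [AddSubmonoidClass.coe_finsetSum]
    exact eq_sum_mul_matrixUnit _ S ha

theorem matrixUnitIn_mem_of_isTwoSided {I : Submodule K A}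
    (hI : IsTwoSided (K := K) (A := A) I) (hI0 : I ≠ ⊥) (δ β : σ →₀ ℕ) :
    matrixUnitIn hA δ β ∈ I := by
  obtain ⟨b, hbI, hb0⟩ := (Submodule.ne_bot_iff I).mp hI0
  obtain ⟨β', γ', hc⟩ := exists_coeff_apply_monomial_ne_zero
    (fun h => hb0 (Subtype.ext h) : (b : Module.End K (MvPolynomial σ K)) ≠ 0)
  have hmem : matrixUnitIn hA δ β' * b * matrixUnitIn hA γ' β ∈ I :=
    (hI _ (hI b hbI _).1 _).2
  rw [matrixUnitIn_mul_mul_matrixUnitIn] at hmem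
  simpa [hc] using
    I.smul_mem (coeff β' ((b : Module.End K (MvPolynomial σ K)) (monomial γ' 1)))⁻¹ hmem

include hA in
theorem eq_zero_or_eq_zero_of_forall_mul_mul_eq_zero {a b : A}
    (h : ∀ r : A, a * r * b = 0) : a = 0 ∨ b = 0 := by
  by_contra! hab
  obtain ⟨β₁, γ₁, ha⟩ := exists_coeff_apply_monomial_ne_zero
    (fun h => hab.1 (Subtype.ext h) : (a : Module.End K (MvPolynomial σ K)) ≠ 0)
  obtain ⟨β₂, γ₂, hb⟩ := exists_coeff_apply_monomial_ne_zero
    (fun h => hab.2 (Subtype.ext h) : (b : Module.End K (MvPolynomial σ K)) ≠ 0)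
  have key : matrixUnitIn hA 0 β₁ * (a * matrixUnitIn hA γ₁ β₂ * b) * matrixUnitIn hA γ₂ 0 =
      (coeff β₁ ((a : Module.End K (MvPolynomial σ K)) (monomial γ₁ 1)) *
        coeff β₂ ((b : Module.End K (MvPolynomial σ K)) (monomial γ₂ 1))) •
        matrixUnitIn hA 0 0 := by
    rw [show matrixUnitIn hA 0 β₁ * (a * matrixUnitIn hA γ₁ β₂ * b) * matrixUnitIn hA γ₂ 0 =
        matrixUnitIn hA 0 β₁ * a * matrixUnitIn hA γ₁ β₂ * b * matrixUnitIn hA γ₂ 0 by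
          simp only [mul_assoc],
      matrixUnitIn_mul_mul_matrixUnitIn, smul_mul_assoc, smul_mul_assoc,
      matrixUnitIn_mul_mul_matrixUnitIn, smul_smul]
  rw [h, mul_zero, zero_mul, eq_comm, smul_eq_zero] at key
  exact key.elim (mul_ne_zero ha hb) (matrixUnitIn_ne_zero hA 0 0)

end SubalgebraContainingMatrixUnits

end MvPolynomial

section JacobianAlgebra

variable {K : Type*} [Field K] {n : ℕ}

theorem xO_mem_An (i : Fin n) : xO K n i ∈ An K n :=
  Algebra.subset_adjoin (Or.inl (Or.inl ⟨i, rfl⟩))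

theorem dO_mem_An (i : Fin n) : dO K n i ∈ An K n :=
  Algebra.subset_adjoin (Or.inl (Or.inr ⟨i, rfl⟩))

theorem xO_apply_monomial (i : Fin n) (α : Fin n →₀ ℕ) :
    xO K n i (monomial α 1) = monomial (α + Finsupp.single i 1) 1 := by
  rw [xO, LinearMap.mulLeft_apply, add_comm, monomial_single_add, pow_one]

theorem dO_apply (i : Fin n) (p : MvPolynomial (Fin n) K) : dO K n i p = pderiv i p :=
  rfl

theorem dO_mul_xO (i : Fin n) :
    dO K n i * xO K n i = diagonalEnd fun α => (α i : K) + 1 :=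
  linearMap_ext_monomial_one fun α => by
    simp [xO_apply_monomial, dO_apply, pderiv_monomial, diagonalEnd_monomial, smul_monomial]

variable [CharZero K]

theorem diagonalEnd_inv_mul_dO_mul_xO (i : Fin n) :
    diagonalEnd (fun α => ((α i : K) + 1)⁻¹) * (dO K n i * xO K n i) = 1 := by
  rw [dO_mul_xO, ← map_mul, ← map_one diagonalEnd]
  congr 1
  funext α
  exact inv_mul_cancel₀ (Nat.cast_add_one_ne_zero (α i))

theorem dO_mul_xO_mul_diagonalEnd_inv (i : Fin n) :
    dO K n i * xO K n i * diagonalEnd (fun α => ((α i : K) + 1)⁻¹) = 1 := by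
  rw [dO_mul_xO, ← map_mul, ← map_one diagonalEnd]
  congr 1
  funext α
  exact mul_inv_cancel₀ (Nat.cast_add_one_ne_zero (α i))

theorem diagonalEnd_inv_mem_An (i : Fin n) :
    diagonalEnd (fun α => ((α i : K) + 1)⁻¹) ∈ An K n :=
  Algebra.subset_adjoin
    (Or.inr ⟨i, diagonalEnd_inv_mul_dO_mul_xO i, dO_mul_xO_mul_diagonalEnd_inv i⟩)

theorem one_sub_xO_mul_mul_dO (i : Fin n) :
    1 - xO K n i * diagonalEnd (fun α => ((α i : K) + 1)⁻¹) * dO K n i =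
      diagonalEnd fun α => if α i = 0 then 1 else 0 := by
  refine linearMap_ext_monomial_one fun α => ?_
  by_cases hα : α i = 0
  · simp [hα, dO_apply, pderiv_monomial, diagonalEnd_monomial]
  · have hsub : α - Finsupp.single i 1 + Finsupp.single i 1 = α :=
      tsub_add_cancel_of_le (Finsupp.single_le_iff.mpr (Nat.one_le_iff_ne_zero.mpr hα))
    have hcoeff : (((α - Finsupp.single i 1 : Fin n →₀ ℕ) i : ℕ) : K) + 1 = α i := by
      rw [← Nat.cast_add_one, Finsupp.tsub_apply, Finsupp.single_eq_same,
        Nat.sub_add_cancel (Nat.one_le_iff_ne_zero.mpr hα)]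
    have hα' : (α i : K) ≠ 0 := Nat.cast_ne_zero.mpr hα
    rw [LinearMap.sub_apply, Module.End.mul_apply, Module.End.mul_apply, dO_apply,
      pderiv_monomial, diagonalEnd_monomial, hcoeff, smul_monomial, one_mul, smul_eq_mul,
      inv_mul_cancel₀ hα', xO_apply_monomial, hsub, diagonalEnd_monomial, if_neg hα, zero_smul,
      Module.End.one_apply, sub_self]

theorem matrixUnit_zero_zero_mem_An : matrixUnit 0 0 ∈ An K n := by
  have h : (matrixUnit 0 0 : Module.End K (MvPolynomial (Fin n) K)) =
      (List.ofFn fun i =>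
        1 - xO K n i * diagonalEnd (fun α => ((α i : K) + 1)⁻¹) * dO K n i).prod := by
    simp_rw [one_sub_xO_mul_mul_dO]
    rw [← Function.comp_def diagonalEnd, ← List.map_ofFn, ← map_list_prod, List.prod_ofFn]
    refine linearMap_ext_monomial_one fun α => ?_
    simp only [matrixUnit_apply, diagonalEnd_monomial, coeff_monomial, Finset.prod_apply,
      Fintype.prod_boole, ite_smul, one_smul, zero_smul]
    have hzero : (∀ i, α i = 0) ↔ α = 0 := ⟨fun h => Finsupp.ext h, fun h i => by simp [h]⟩
    simp only [hzero]
    split_ifs with h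
    · rw [h]
    · rfl
  rw [h]
  refine list_prod_mem fun x hx => ?_
  obtain ⟨i, rfl⟩ := List.mem_ofFn.mp hx
  exact sub_mem (one_mem _)
    (mul_mem (mul_mem (xO_mem_An i) (diagonalEnd_inv_mem_An i)) (dO_mem_An i))

theorem matrixUnit_mem_An (δ β : Fin n →₀ ℕ) : matrixUnit δ β ∈ An K n := by
  induction δ using Finsupp.induction_add_single_one with
  | zero =>
    induction β using Finsupp.induction_add_single_one with
    | zero => exact matrixUnit_zero_zero_mem_An
    | add_single_one β i hβ =>
      have h := matrixUnit_mul_pderiv (R := K) i 0 β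
      rw [← inv_smul_eq_iff₀ (Nat.cast_add_one_ne_zero (β i))] at h
      rw [← h]
      exact Subalgebra.smul_mem _ (mul_mem hβ (dO_mem_An i)) _
  | add_single_one δ i hδ =>
    rw [← mulLeft_X_mul_matrixUnit]
    exact mul_mem (xO_mem_An i) hδ

theorem exists_X_pow_mul_of_mem_An {r : Module.End K (MvPolynomial (Fin n) K)} (hr : r ∈ An K n)
    (i : Fin n) (m : ℕ) : ∃ m', ∀ p, ∃ q, r (X i ^ m' * p) = X i ^ m * q := by
  induction hr using Algebra.adjoin_induction generalizing m with
  | mem g hg =>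
    rcases hg with (⟨j, rfl⟩ | ⟨j, rfl⟩) | ⟨j, hgH, -⟩
    · exact ⟨m, fun p => ⟨X j * p, by rw [xO, LinearMap.mulLeft_apply, mul_left_comm]⟩⟩
    · refine ⟨m + 1, fun p =>
        ⟨((m : MvPolynomial (Fin n) K) + 1) * pderiv j (X i) * p + X i * pderiv j p, ?_⟩⟩
      rw [dO_apply, pderiv_mul, pderiv_pow, Nat.add_sub_cancel]
      push_cast
      ring
    · obtain rfl : g = diagonalEnd fun α => ((α j : K) + 1)⁻¹ :=
        left_inv_eq_right_inv hgH (dO_mul_xO_mul_diagonalEnd_inv j)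
      exact ⟨m, fun p => ⟨_, diagonalEnd_X_pow_mul _ i m p⟩⟩
  | algebraMap c =>
    exact ⟨m, fun p => ⟨c • p, by rw [Module.algebraMap_end_apply, mul_smul_comm]⟩⟩
  | add x y _ _ ihx ihy =>
    obtain ⟨m₁, h₁⟩ := ihx m
    obtain ⟨m₂, h₂⟩ := ihy m
    refine ⟨m₁ + m₂, fun p => ?_⟩
    obtain ⟨q₁, hq₁⟩ := h₁ (X i ^ m₂ * p)
    obtain ⟨q₂, hq₂⟩ := h₂ (X i ^ m₁ * p)
    rw [← mul_assoc, ← pow_add] at hq₁ hq₂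
    rw [add_comm m₂] at hq₂
    exact ⟨q₁ + q₂, by rw [LinearMap.add_apply, hq₁, hq₂, mul_add]⟩
  | mul x y _ _ ihx ihy =>
    obtain ⟨m₁, h₁⟩ := ihx m
    obtain ⟨m₂, h₂⟩ := ihy m₁
    refine ⟨m₂, fun p => ?_⟩
    obtain ⟨q₂, hq₂⟩ := h₂ p
    obtain ⟨q₁, hq₁⟩ := h₁ q₂
    exact ⟨q₁, by rw [Module.End.mul_apply, hq₂, hq₁]⟩

end JacobianAlgebra

section Ideals

variable (K : Type*) [Field K] (n : ℕ)

noncomputable def pIdeal (i : Fin n) : Submodule K (An K n) where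
  carrier := pCar K n i
  zero_mem' := ⟨0, fun _ => rfl⟩
  add_mem' := by
    rintro a b ⟨m₁, h₁⟩ ⟨m₂, h₂⟩
    refine ⟨m₁ + m₂, fun p => ?_⟩
    rw [Subalgebra.coe_add, LinearMap.add_apply,
      apply_X_pow_mul_eq_zero_of_le h₁ (Nat.le_add_right m₁ m₂) p,
      apply_X_pow_mul_eq_zero_of_le h₂ (Nat.le_add_left m₂ m₁) p, add_zero]
  smul_mem' := by
    rintro c a ⟨m, h⟩
    exact ⟨m, fun p => by rw [Subalgebra.coe_smul, LinearMap.smul_apply, h, smul_zero]⟩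

/-- The ideal `F^{⊗n} = ⋂ᵢ 𝔭ᵢ`. -/
noncomputable def fIdeal : Submodule K (An K n) :=
  ⨅ i, pIdeal K n i

theorem coe_fIdeal : (fIdeal K n : Set (An K n)) = {a | ∀ i, a ∈ pCar K n i} :=
  Set.ext fun _ => Submodule.mem_iInf _

variable {K n}

theorem exists_finset_apply_monomial_eq_zero_of_mem_fIdeal {a : An K n} (ha : a ∈ fIdeal K n) :
    ∃ S : Finset (Fin n →₀ ℕ), ∀ α ∉ S,
      (a : Module.End K (MvPolynomial (Fin n) K)) (monomial α 1) = 0 := by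
  have ha' : ∀ i, a ∈ pCar K n i := (Submodule.mem_iInf _).mp ha
  choose m hm using ha'
  refine ⟨Finset.Iic (Finsupp.equivFunOnFinite.symm m), fun α hα => ?_⟩
  obtain ⟨i, hi⟩ : ∃ i, m i < α i := by simpa [Finsupp.le_def] using hα
  rw [← tsub_add_cancel_of_le (Finsupp.single_le_iff.mpr hi.le), add_comm, monomial_single_add]
  exact hm i _

variable [CharZero K]

theorem isTwoSided_pIdeal (i : Fin n) : IsTwoSided (K := K) (A := An K n) (pIdeal K n i) := by
  rintro a ⟨m, ha⟩ r
  refine ⟨⟨m, fun p => ?_⟩, ?_⟩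
  · rw [Subalgebra.coe_mul, Module.End.mul_apply, ha, map_zero]
  · obtain ⟨m', hm'⟩ := exists_X_pow_mul_of_mem_An r.2 i m
    refine ⟨m', fun p => ?_⟩
    obtain ⟨q, hq⟩ := hm' p
    rw [Subalgebra.coe_mul, Module.End.mul_apply, hq, ha]

theorem isTwoSided_fIdeal : IsTwoSided (K := K) (A := An K n) (fIdeal K n) := fun a ha r => by
  simp only [fIdeal, Submodule.mem_iInf] at ha ⊢
  exact ⟨fun i => (isTwoSided_pIdeal i a (ha i) r).1, fun i => (isTwoSided_pIdeal i a (ha i) r).2⟩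

theorem matrixUnitIn_mem_fIdeal (δ β : Fin n →₀ ℕ) :
    matrixUnitIn matrixUnit_mem_An δ β ∈ fIdeal K n :=
  (Submodule.mem_iInf _).mpr fun i => ⟨β i + 1, matrixUnit_apply_X_pow_mul δ β i⟩

theorem fIdeal_le {I : Submodule K (An K n)} (hI : IsTwoSided (K := K) (A := An K n) I)
    (hI0 : I ≠ ⊥) : fIdeal K n ≤ I := fun a ha => by
  obtain ⟨S, hS⟩ := exists_finset_apply_monomial_eq_zero_of_mem_fIdeal ha
  rw [eq_sum_mul_matrixUnitIn matrixUnit_mem_An a S hS]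
  exact Submodule.sum_mem _ fun α _ =>
    (hI _ (matrixUnitIn_mem_of_isTwoSided matrixUnit_mem_An hI hI0 α α) a).1

theorem fIdeal_mul_self : fIdeal K n * fIdeal K n = fIdeal K n := by
  refine le_antisymm (Submodule.mul_le.mpr fun a _ b hb => (isTwoSided_fIdeal b hb a).1)
    fun a ha => ?_
  obtain ⟨S, hS⟩ := exists_finset_apply_monomial_eq_zero_of_mem_fIdeal ha
  rw [eq_sum_mul_matrixUnitIn matrixUnit_mem_An a S hS]
  refine Submodule.sum_mem _ fun α _ => ?_
  rw [← matrixUnitIn_mul_matrixUnitIn matrixUnit_mem_An α 0 α, ← mul_assoc]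
  exact Submodule.mul_mem_mul ((isTwoSided_fIdeal a ha _).2) (matrixUnitIn_mem_fIdeal 0 α)

theorem fIdeal_ne_bot : fIdeal K n ≠ ⊥ := fun h =>
  matrixUnitIn_ne_zero matrixUnit_mem_An 0 0 <| by
    simpa [h] using matrixUnitIn_mem_fIdeal (K := K) (n := n) 0 0

end Ideals

/-- `F^{⊗n}` (the operators in `𝔸ₙ` vanishing on `xᵢ^m·Pₙ` for large `m`,
for every `i`) is the smallest nonzero two-sided ideal of `𝔸ₙ`, it is idempotent, and
consequently `𝔸ₙ` is a prime ring. -/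
theorem stmt5 (K : Type*) [Field K] [CharZero K] (n : ℕ) :
    ∃ Fn : Submodule K ↥(An K n),
      (Fn : Set ↥(An K n)) = {a | ∀ i : Fin n, a ∈ pCar K n i} ∧
      IsTwoSided (K := K) (A := ↥(An K n)) Fn ∧ Fn ≠ ⊥ ∧ Fn * Fn = Fn ∧
      (∀ I : Submodule K ↥(An K n), IsTwoSided (K := K) (A := ↥(An K n)) I → I ≠ ⊥ → Fn ≤ I) ∧
      (∀ a b : ↥(An K n), (∀ r : ↥(An K n), a * r * b = 0) → a = 0 ∨ b = 0) :=
  ⟨fIdeal K n, coe_fIdeal K n, isTwoSided_fIdeal, fIdeal_ne_bot, fIdeal_mul_self,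
    fun _ hI hI0 => fIdeal_le hI hI0,
    fun _ _ h => eq_zero_or_eq_zero_of_forall_mul_mul_eq_zero matrixUnit_mem_An h⟩
end

section
/- Let K be a field of characteristic zero. For antichains C, C' in 𝔅_n, the ideals satisfy I_C ⊆ I_{C'} if and only if for each f ∈ C there exists f' ∈ C' with f ≤ f'. -/
set_option synthInstance.maxHeartbeats 1000000
set_option maxHeartbeats 1000000

open MvPolynomial

/-- The carrier of the ideal `I_f = I_{f(1)} ⊗ ⋯ ⊗ I_{f(n)}` where `I_false = F` and
`I_true = 𝔸₁`. -/
def IfCar (K : Type*) [Field K] (n : ℕ) (f : Fin n → Bool) : Set ↥(An K n) :=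
  {a | ∀ i : Fin n, f i = false → a ∈ pCar K n i}

/-!
For `f ∈ C` let `S = {i | f i = false}`. Setting the variables of `S` to zero is the operator
`∏_{i ∈ S} (1 - xᵢ Hᵢ⁻¹ ∂ᵢ)` of `𝔸ₙ`, and it lies in `I_f`. It fixes every power of
`q = ∏_{i ∉ S} xᵢ`. If no `f' ∈ C'` dominates `f`, then each `f' ∈ C'` has a coordinate `j` with
`f j = true` and `f' j = false`, so `I_{f'}` kills all multiples of some power of `xⱼ ∣ q`; hence all of
`I_{C'}` kills multiples of some power of `q`, and the operator cannot lie in `I_{C'}`.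
The converse holds because `I_f ⊆ I_{f'}` whenever `f ≤ f'`.
-/

section EventualAnnihilator

variable {K R : Type*} [CommSemiring K] [CommSemiring R] [Algebra K R]

def eventualAnnihilator (q : R) : Submodule K (Module.End K R) where
  carrier := {a | ∃ m : ℕ, ∀ p, a (q ^ m * p) = 0}
  zero_mem' := ⟨0, fun _ => rfl⟩
  add_mem' := by
    rintro a b ⟨m, ha⟩ ⟨m', hb⟩
    refine ⟨m + m', fun p => ?_⟩
    rw [LinearMap.add_apply, pow_add, mul_assoc, ha, mul_left_comm, hb, add_zero]
  smul_mem' := by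
    rintro c a ⟨m, ha⟩
    exact ⟨m, fun p => by rw [LinearMap.smul_apply, ha, smul_zero]⟩

lemma eventualAnnihilator_mono {q q' : R} (h : q ∣ q') :
    eventualAnnihilator (K := K) q ≤ eventualAnnihilator q' := by
  rintro a ⟨m, ha⟩
  obtain ⟨r, rfl⟩ := h
  exact ⟨m, fun p => by rw [mul_pow, mul_assoc, ha]⟩

end EventualAnnihilator

section PderivMulXInv

variable {σ K : Type*} [Field K]

lemma basisMonomials_apply (μ : σ →₀ ℕ) : basisMonomials σ K μ = monomial μ 1 := by
  rw [coe_basisMonomials]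

lemma pderiv_X_mul_monomial (i : σ) (μ : σ →₀ ℕ) (c : K) :
    pderiv i (X i * monomial μ c) = ((μ i : K) + 1) • monomial μ c := by
  rw [Derivation.leibniz, pderiv_X_self, smul_eq_mul, X_mul_pderiv_monomial, add_smul, one_smul,
    smul_eq_mul, mul_one, Nat.cast_smul_eq_nsmul]

/-- The inverse of `Hᵢ = ∂ᵢ xᵢ`, which acts on `x^μ` by the scalar `μ i + 1`. -/
noncomputable def pderivMulXInv (i : σ) : Module.End K (MvPolynomial σ K) :=
  (basisMonomials σ K).constr K fun μ => ((μ i : K) + 1)⁻¹ • monomial μ 1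

lemma pderivMulXInv_monomial (i : σ) (μ : σ →₀ ℕ) (c : K) :
    pderivMulXInv i (monomial μ c) = ((μ i : K) + 1)⁻¹ • monomial μ c := by
  rw [← mul_one c, ← smul_eq_mul, ← smul_monomial, map_smul, pderivMulXInv,
    ← basisMonomials_apply, Module.Basis.constr_basis, basisMonomials_apply, smul_comm]

variable [CharZero K]

lemma pderivMulXInv_mul_pderiv_mulLeft_X (i : σ) :
    pderivMulXInv i * ((pderiv i).toLinearMap * LinearMap.mulLeft K (X i)) = 1 := by
  refine (basisMonomials σ K).ext fun μ => ?_
  rw [basisMonomials_apply, Module.End.mul_apply, Module.End.mul_apply, LinearMap.mulLeft_apply,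
    Derivation.coeFn_coe, pderiv_X_mul_monomial, map_smul, pderivMulXInv_monomial, smul_smul,
    mul_inv_cancel₀ (Nat.cast_add_one_ne_zero _), one_smul, Module.End.one_apply]

lemma pderiv_mulLeft_X_mul_pderivMulXInv (i : σ) :
    ((pderiv i).toLinearMap * LinearMap.mulLeft K (X i)) * pderivMulXInv i = 1 := by
  refine (basisMonomials σ K).ext fun μ => ?_
  rw [basisMonomials_apply, Module.End.mul_apply, pderivMulXInv_monomial, map_smul,
    Module.End.mul_apply, LinearMap.mulLeft_apply, Derivation.coeFn_coe, pderiv_X_mul_monomial,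
    smul_smul, inv_mul_cancel₀ (Nat.cast_add_one_ne_zero _), one_smul, Module.End.one_apply]

lemma X_mul_pderivMulXInv_pderiv_monomial (i : σ) (μ : σ →₀ ℕ) (c : K) :
    X i * pderivMulXInv i (pderiv i (monomial μ c)) = if μ i = 0 then 0 else monomial μ c := by
  rw [pderiv_monomial]
  split_ifs with h
  · simp [h]
  obtain ⟨ν, rfl⟩ : ∃ ν, μ = ν + Finsupp.single i 1 :=
    ⟨μ - Finsupp.single i 1,
      (tsub_add_cancel_of_le (Finsupp.single_le_iff.2 (Nat.one_le_iff_ne_zero.2 h))).symm⟩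
  simp only [add_tsub_cancel_right, Finsupp.add_apply, Finsupp.single_eq_same, Nat.cast_add,
    Nat.cast_one, pderivMulXInv_monomial, smul_monomial, smul_eq_mul, X, monomial_mul, one_mul,
    add_comm (Finsupp.single i 1)]
  rw [mul_left_comm, inv_mul_cancel₀ (Nat.cast_add_one_ne_zero _), mul_one]

end PderivMulXInv

section ZeroVars

variable {σ K : Type*} [Field K] [DecidableEq σ]

noncomputable def zeroVars (S : Finset σ) : MvPolynomial σ K →ₐ[K] MvPolynomial σ K :=
  aeval fun k => if k ∈ S then 0 else X k

lemma zeroVars_monomial (S : Finset σ) (μ : σ →₀ ℕ) (c : K) :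
    zeroVars S (monomial μ c) = if ∀ k ∈ S, μ k = 0 then monomial μ c else 0 := by
  rw [zeroVars, aeval_monomial, monomial_eq, algebraMap_eq]
  split_ifs with h
  · congr 1
    refine Finsupp.prod_congr fun k hk => ?_
    rw [if_neg fun hkS => Finsupp.mem_support_iff.1 hk (h k hkS)]
  · push Not at h
    obtain ⟨k, hkS, hk⟩ := h
    rw [Finsupp.prod, Finset.prod_eq_zero (Finsupp.mem_support_iff.2 hk)
      (by rw [if_pos hkS, zero_pow hk]), mul_zero]

lemma zeroVars_X_mul {S : Finset σ} {k : σ} (hk : k ∈ S) (p : MvPolynomial σ K) :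
    zeroVars S (X k * p) = 0 := by
  simp [zeroVars, hk]

lemma zeroVars_prod_X_compl [Fintype σ] (S : Finset σ) :
    zeroVars S (∏ k ∈ Sᶜ, X k : MvPolynomial σ K) = ∏ k ∈ Sᶜ, X k := by
  simp only [zeroVars, map_prod, aeval_X]
  exact Finset.prod_congr rfl fun k hk => if_neg (Finset.mem_compl.1 hk)

lemma zeroVars_notMem_eventualAnnihilator [Fintype σ] (S : Finset σ) :
    (zeroVars S).toLinearMap ∉ eventualAnnihilator (∏ k ∈ Sᶜ, X k : MvPolynomial σ K) := by
  rintro ⟨m, hm⟩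
  have hfix := hm 1
  rw [mul_one, AlgHom.toLinearMap_apply, map_pow, zeroVars_prod_X_compl] at hfix
  exact pow_ne_zero m (Finset.prod_ne_zero_iff.2 fun k _ => X_ne_zero k) hfix

lemma zeroVars_empty : zeroVars (∅ : Finset σ) = AlgHom.id K (MvPolynomial σ K) := by
  simp [zeroVars]

lemma zeroVars_insert (S : Finset σ) (j : σ) :
    zeroVars (insert j S) = (zeroVars {j}).comp (zeroVars S : MvPolynomial σ K →ₐ[K] _) := by
  refine algHom_ext fun k => ?_
  simp only [zeroVars, AlgHom.comp_apply, aeval_X, Finset.mem_insert]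
  split_ifs <;> simp_all

lemma zeroVars_singleton [CharZero K] (i : σ) :
    (zeroVars {i}).toLinearMap =
      1 - LinearMap.mulLeft K (X i) * pderivMulXInv i * (pderiv i).toLinearMap := by
  refine (basisMonomials σ K).ext fun μ => ?_
  rw [basisMonomials_apply, AlgHom.toLinearMap_apply, zeroVars_monomial, LinearMap.sub_apply,
    Module.End.one_apply, Module.End.mul_apply, Module.End.mul_apply, LinearMap.mulLeft_apply,
    Derivation.coeFn_coe, X_mul_pderivMulXInv_pderiv_monomial]
  by_cases h : μ i = 0 <;> simp [h]

end ZeroVars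

section Jacobian

variable {K : Type*} [Field K] {n : ℕ}

lemma zeroVars_mem_An [CharZero K] (S : Finset (Fin n)) :
    (zeroVars S).toLinearMap ∈ An K n := by
  induction S using Finset.induction with
  | empty => rw [zeroVars_empty]; exact one_mem _
  | insert j S _ ih =>
    have hx : LinearMap.mulLeft K (X j) ∈ An K n :=
      Algebra.subset_adjoin (Or.inl (Or.inl ⟨j, rfl⟩))
    have hd : (pderiv j).toLinearMap ∈ An K n :=
      Algebra.subset_adjoin (Or.inl (Or.inr ⟨j, rfl⟩))
    have hH : pderivMulXInv j ∈ An K n := Algebra.subset_adjoin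
      (Or.inr ⟨j, pderivMulXInv_mul_pderiv_mulLeft_X j, pderiv_mulLeft_X_mul_pderivMulXInv j⟩)
    rw [zeroVars_insert, AlgHom.comp_toLinearMap, zeroVars_singleton]
    exact mul_mem (sub_mem (one_mem _) (mul_mem (mul_mem hx hH) hd)) ih

lemma zeroVars_mem_IfCar [CharZero K] (f : Fin n → Bool) :
    (⟨(zeroVars {i | f i = false}).toLinearMap, zeroVars_mem_An _⟩ : An K n) ∈ IfCar K n f :=
  fun i hi => ⟨1, fun p => by
    rw [pow_one]
    exact zeroVars_X_mul (Finset.mem_filter.2 ⟨Finset.mem_univ i, hi⟩) p⟩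

lemma IfCar_mono {f f' : Fin n → Bool} (h : f ≤ f') : IfCar K n f ⊆ IfCar K n f' :=
  fun _ ha i hi => ha i (le_bot_iff.1 ((h i).trans_eq hi))

lemma IfCar_subset_of_not_le {f f' : Fin n → Bool} (h : ¬ f ≤ f') :
    IfCar K n f' ⊆ {a | (a : Module.End K (MvPolynomial (Fin n) K)) ∈
      eventualAnnihilator (∏ k ∈ ({i | f i = false} : Finset (Fin n))ᶜ, X k)} := by
  obtain ⟨j, hj⟩ := not_forall.1 h
  obtain ⟨hf'j, hfj⟩ := Bool.lt_iff.1 (lt_of_not_ge hj)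
  exact fun a ha => eventualAnnihilator_mono
    (Finset.dvd_prod_of_mem _ (by simp [hfj])) (ha j hf'j)

end Jacobian

theorem stmt9_general (K : Type*) [Field K] [CharZero K] (n : ℕ)
    (If : (Fin n → Bool) → Submodule K ↥(An K n))
    (hIf : ∀ f, (If f : Set ↥(An K n)) = IfCar K n f)
    (C C' : Set (Fin n → Bool)) :
    (⨆ f ∈ C, If f) ≤ (⨆ f ∈ C', If f) ↔ ∀ f ∈ C, ∃ f' ∈ C', f ≤ f' := by
  have hIf_le (f : Fin n → Bool) (N : Submodule K (An K n)) :
      If f ≤ N ↔ IfCar K n f ⊆ N := by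
    rw [← hIf]; rfl
  constructor
  · intro h f hf
    by_contra! hno
    have hmem := h (Submodule.mem_iSup_of_mem f (Submodule.mem_iSup_of_mem hf
      ((hIf_le f _).1 le_rfl (zeroVars_mem_IfCar f))))
    have hkill : (⨆ f' ∈ C', If f') ≤ (eventualAnnihilator
        (∏ k ∈ ({i | f i = false} : Finset (Fin n))ᶜ, X k)).comap (An K n).val.toLinearMap :=
      iSup₂_le fun f' hf' => (hIf_le f' _).2 (IfCar_subset_of_not_le (hno f' hf'))
    exact zeroVars_notMem_eventualAnnihilator _ (hkill hmem)
  · intro hdom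
    refine iSup₂_le fun f hf => ?_
    obtain ⟨f', hf', hle⟩ := hdom f hf
    exact le_iSup₂_of_le f' hf' ((hIf_le f _).2 ((IfCar_mono hle).trans_eq (hIf f').symm))

/-- For antichains `C, C'` of `{0,1}^{1..n}`, `I_C ⊆ I_{C'}` iff every
`f ∈ C` is dominated by some `f' ∈ C'`. -/
theorem stmt9 (K : Type*) [Field K] [CharZero K] (n : ℕ)
    (If : (Fin n → Bool) → Submodule K ↥(An K n))
    (hIf : ∀ f, (If f : Set ↥(An K n)) = IfCar K n f)
    (C C' : Set (Fin n → Bool))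
    (hC : IsAntichain (· ≤ ·) C) (hC' : IsAntichain (· ≤ ·) C') :
    (⨆ f ∈ C, If f) ≤ (⨆ f ∈ C', If f) ↔ ∀ f ∈ C, ∃ f' ∈ C', f ≤ f' :=
  stmt9_general K n If hIf C C'
end
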